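/- Let I = {I_m} be a filtration of a Noetherian ring R. Define J_m = {f ∈ R : f^r ∈ \overline{I_{rm}} for some r > 0} (the integral closure filtration IC(I)). Then ν̄_I = ν̄_{IC(I)}. -/

import Mathlib

open Filter Topology Polynomial
open scoped ENNReal

/-- A filtration `I = {I_m}` of ideals of `R`: `I_0 = R`, `I_{n+1} ⊆ I_n`,
and `I_m · I_n ⊆ I_{m+n}`. -/
structure RingFiltration (R : Type*) [CommRing R] where
  I : ℕ → Ideal R
  top_eq : I 0 = ⊤
  antitone_succ : ∀ n, I (n + 1) ≤ I n
  mul_le : ∀ m n, I m * I n ≤ I (m + n)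

namespace RingFiltration
variable {R : Type*} [CommRing R] (F : RingFiltration R)

/-- The order function `ν_I(f) = sup {m : f ∈ I_m}`, viewed in `[0,∞]`. -/
noncomputable def nu (f : R) : ℝ≥0∞ :=
  sSup ((fun m : ℕ => (m : ℝ≥0∞)) '' {m | f ∈ F.I m})

/-- The asymptotic Samuel function `ν̄_I(f) = lim_n ν_I(f^n)/n` (the limit exists and
equals the limsup used here to define it). -/
noncomputable def nubar (f : R) : ℝ≥0∞ :=
  Filter.limsup (fun n : ℕ => F.nu (f ^ n) / (n : ℝ≥0∞)) Filter.atTop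

end RingFiltration

/-- The integral closure of an ideal `J`: the set of `x` satisfying an equation
`x^n + a_1 x^{n-1} + ⋯ + a_n = 0` with `a_i ∈ J^i`. -/
def Ideal.intCl {R : Type*} [CommRing R] (J : Ideal R) : Set R :=
  {x | ∃ n : ℕ, 0 < n ∧ ∃ a : ℕ → R, (∀ i ∈ Finset.Icc 1 n, a i ∈ J ^ i) ∧
    x ^ n + ∑ i ∈ Finset.Icc 1 n, a i * x ^ (n - i) = 0}

/-!
If `f^r` is integral over `I_{rm}`, then `I_{rm}` is a reduction of `I_{rm} + (f^r)`, so
`f^{r(k+d)} ∈ I_{rm}^k ⊆ I_{krm}` for a fixed `d` and all `k`, whence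
`ν̄_I(f) ≥ krm / (r(k+d)) → m`. Applied to `f = x^n ∈ J_m` this bounds
`ν_{IC(I)}(x^n) / n`, hence `ν̄_{IC(I)}(x)`, by `ν̄_I(x)`; the reverse inequality comes from
`I_m ⊆ J_m`.
-/

open scoped NNReal

namespace Ideal

variable {R : Type*} [CommRing R]

theorem subset_intCl (J : Ideal R) : (J : Set R) ⊆ J.intCl := by
  intro x hx
  refine ⟨1, one_pos, fun _ => -x, fun i hi => ?_, by simp⟩
  obtain rfl : i = 1 := by simpa using hi
  simpa using neg_mem hx

theorem pow_add_le_pow_mul_of_pow_succ_le_mul {J K : Ideal R} {d : ℕ}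
    (h : K ^ (d + 1) ≤ J * K ^ d) (k : ℕ) : K ^ (k + d) ≤ J ^ k * K ^ d := by
  induction k with
  | zero => simp
  | succ k ih =>
    calc K ^ (k + 1 + d) = K * K ^ (k + d) := by rw [add_right_comm, pow_succ']
      _ ≤ K * (J ^ k * K ^ d) := mul_mono_right ih
      _ = J ^ k * K ^ (d + 1) := by rw [pow_succ' K d]; ring
      _ ≤ J ^ k * (J * K ^ d) := mul_mono_right h
      _ = J ^ (k + 1) * K ^ d := by ring

theorem sup_span_singleton_pow_succ_le (J : Ideal R) (x : R) (d : ℕ) :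
    (J ⊔ span {x}) ^ (d + 1) ≤ J * (J ⊔ span {x}) ^ d ⊔ span {x ^ (d + 1)} := by
  set K := J ⊔ span {x}
  induction d with
  | zero => simp [K]
  | succ d ih =>
    have hxK : span {x} * K ^ (d + 1) ≤ J * K ^ (d + 1) ⊔ span {x ^ (d + 2)} :=
      calc span {x} * K ^ (d + 1) ≤ span {x} * (J * K ^ d ⊔ span {x ^ (d + 1)}) :=
            mul_mono_right ih
        _ = J * (span {x} * K ^ d) ⊔ span {x ^ (d + 2)} := by
          rw [mul_sup, span_singleton_mul_span_singleton, mul_left_comm, ← pow_succ']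
        _ ≤ J * K ^ (d + 1) ⊔ span {x ^ (d + 2)} := by
          rw [pow_succ' K d]
          gcongr
          exact le_sup_right
    calc K ^ (d + 2) = J * K ^ (d + 1) ⊔ span {x} * K ^ (d + 1) := by
          rw [pow_succ' K (d + 1), sup_mul]
      _ ≤ J * K ^ (d + 1) ⊔ span {x ^ (d + 2)} := sup_le le_sup_left hxK

theorem exists_pow_succ_mem_mul_sup_span_singleton_pow {J : Ideal R} {x : R}
    (hx : x ∈ J.intCl) : ∃ d : ℕ, x ^ (d + 1) ∈ J * (J ⊔ span {x}) ^ d := by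
  obtain ⟨n, hn, a, ha, heq⟩ := hx
  obtain ⟨d, rfl⟩ : ∃ d, n = d + 1 := ⟨n - 1, by omega⟩
  refine ⟨d, ?_⟩
  rw [eq_neg_of_add_eq_zero_left heq]
  refine neg_mem (Ideal.sum_mem _ fun i hi => ?_)
  obtain ⟨hi1, hid⟩ := Finset.mem_Icc.mp hi
  have hJ : J ^ i ≤ J * (J ⊔ span {x}) ^ (i - 1) := by
    conv_lhs => rw [show i = i - 1 + 1 by omega, pow_succ']
    exact mul_mono_right (pow_right_mono le_sup_left _)
  have hxK : x ^ (d + 1 - i) ∈ (J ⊔ span {x}) ^ (d + 1 - i) :=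
    pow_mem_pow (mem_sup_right (mem_span_singleton_self x)) _
  have := mul_mem_mul (hJ (ha i hi)) hxK
  rwa [mul_assoc, ← pow_add, show i - 1 + (d + 1 - i) = d by omega] at this

theorem exists_pow_add_mem_pow_of_mem_intCl {J : Ideal R} {x : R} (hx : x ∈ J.intCl) :
    ∃ d : ℕ, ∀ k, x ^ (k + d) ∈ J ^ k := by
  obtain ⟨d, hd⟩ := exists_pow_succ_mem_mul_sup_span_singleton_pow hx
  have hred : (J ⊔ span {x}) ^ (d + 1) ≤ J * (J ⊔ span {x}) ^ d :=
    (sup_span_singleton_pow_succ_le J x d).trans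
      (sup_le le_rfl ((span_singleton_le_iff_mem _).2 hd))
  have hxK : x ∈ J ⊔ span {x} := mem_sup_right (mem_span_singleton_self x)
  exact ⟨d, fun k =>
    mul_le_left (pow_add_le_pow_mul_of_pow_succ_le_mul hred k (pow_mem_pow hxK _))⟩

end Ideal

theorem ENNReal.tendsto_natCast_mul_div_natCast_mul_add (a b d : ℕ) (hb : b ≠ 0) :
    Tendsto (fun k : ℕ => ((k * a : ℕ) : ℝ≥0∞) / ((b * (k + d) : ℕ) : ℝ≥0∞)) atTop
      (𝓝 ((a : ℝ≥0∞) / b)) := by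
  have h := (tendsto_natCast_div_add_atTop (d : ℝ≥0)).const_mul ((a : ℝ≥0) / b)
  rw [mul_one, ← ENNReal.tendsto_coe, ENNReal.coe_div (by simpa)] at h
  refine h.congr' ((eventually_gt_atTop 0).mono fun k hk => ?_)
  rw [div_mul_div_comm, ENNReal.coe_div (by positivity)]
  push_cast
  ring_nf

namespace RingFiltration

variable {R : Type*} [CommRing R] (F : RingFiltration R)

theorem le_nu {f : R} {m : ℕ} (h : f ∈ F.I m) : (m : ℝ≥0∞) ≤ F.nu f :=
  le_sSup ⟨m, h, rfl⟩

theorem nu_div_le_of_forall_mem {f : R} {n : ℕ} {c : ℝ≥0∞} (hn : n ≠ 0)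
    (h : ∀ m, f ∈ F.I m → (m : ℝ≥0∞) / n ≤ c) : F.nu f / n ≤ c := by
  refine ENNReal.div_le_of_le_mul (sSup_le ?_)
  rintro _ ⟨m, hm, rfl⟩
  exact (ENNReal.div_le_iff_le_mul (Or.inl (by simpa)) (Or.inl (by simp))).1 (h m hm)

theorem pow_le (a s : ℕ) : F.I a ^ s ≤ F.I (s * a) := by
  induction s with
  | zero => simp [Ideal.one_eq_top, F.top_eq]
  | succ s ih =>
    calc F.I a ^ (s + 1) = F.I a ^ s * F.I a := pow_succ _ _
      _ ≤ F.I (s * a) * F.I a := Ideal.mul_mono_left ih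
      _ ≤ F.I (s * a + a) := F.mul_le _ _
      _ = F.I ((s + 1) * a) := by rw [Nat.succ_mul]

theorem nubar_mono {G : RingFiltration R} (h : ∀ m, F.I m ≤ G.I m) (x : R) :
    F.nubar x ≤ G.nubar x :=
  limsup_le_limsup (Eventually.of_forall fun _ =>
    ENNReal.div_le_div_right (sSup_le_sSup (Set.image_mono fun m hm => h m hm)) _)

theorem nubar_le_of_forall_pow_mem {x : R} {c : ℝ≥0∞}
    (h : ∀ n m : ℕ, 0 < n → x ^ n ∈ F.I m → (m : ℝ≥0∞) / n ≤ c) : F.nubar x ≤ c :=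
  limsup_le_of_le (by isBoundedDefault)
    ((eventually_gt_atTop 0).mono fun n hn =>
      F.nu_div_le_of_forall_mem hn.ne' (h n · hn))

theorem div_le_nubar_of_pow_mem {x : R} {m n : ℕ} (hn : 0 < n) (h : x ^ n ∈ F.I m) :
    (m : ℝ≥0∞) / n ≤ F.nubar x := by
  refine le_limsup_of_frequently_le
    (frequently_atTop.2 fun q => ⟨(q + 1) * n, by nlinarith, ?_⟩) (by isBoundedDefault)
  have hq : x ^ ((q + 1) * n) ∈ F.I ((q + 1) * m) := by
    rw [pow_mul']
    exact F.pow_le m (q + 1) (Ideal.pow_mem_pow h _)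
  calc (m : ℝ≥0∞) / n = ((q + 1) * m : ℕ) / ((q + 1) * n : ℕ) := by
        push_cast
        rw [ENNReal.mul_div_mul_left] <;> simp
    _ ≤ F.nu (x ^ ((q + 1) * n)) / ((q + 1) * n : ℕ) :=
        ENNReal.div_le_div_right (F.le_nu hq) _

theorem div_le_nubar_of_pow_mem_intCl {x : R} {m n : ℕ} (hn : 0 < n)
    (h : x ^ n ∈ (F.I m).intCl) : (m : ℝ≥0∞) / n ≤ F.nubar x := by
  obtain ⟨d, hd⟩ := Ideal.exists_pow_add_mem_pow_of_mem_intCl h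
  refine le_of_tendsto (ENNReal.tendsto_natCast_mul_div_natCast_mul_add m n d hn.ne')
    ((eventually_gt_atTop 0).mono fun k hk => F.div_le_nubar_of_pow_mem (by positivity) ?_)
  rw [pow_mul]
  exact F.pow_le m k (hd k)

end RingFiltration

theorem nubar_eq_nubar_IC_general {R : Type*} [CommRing R]
    (F G : RingFiltration R)
    (hG : ∀ m, (G.I m : Set R) =
      {f : R | ∃ r : ℕ, 0 < r ∧ f ^ r ∈ Ideal.intCl (F.I (r * m))}) (x : R) :
    F.nubar x = G.nubar x := by
  have hFG : ∀ m, F.I m ≤ G.I m := fun m f hf => by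
    rw [← SetLike.mem_coe, hG]
    exact ⟨1, one_pos, by simpa using (F.I m).subset_intCl hf⟩
  refine le_antisymm (F.nubar_mono hFG x) (G.nubar_le_of_forall_pow_mem fun n m hn hm => ?_)
  rw [← SetLike.mem_coe, hG] at hm
  obtain ⟨r, hr, hxr⟩ := hm
  rw [← pow_mul] at hxr
  calc (m : ℝ≥0∞) / n = ((r * m : ℕ) : ℝ≥0∞) / ((n * r : ℕ) : ℝ≥0∞) := by
        push_cast
        rw [mul_comm (n : ℝ≥0∞), ENNReal.mul_div_mul_left] <;> simp [hr.ne']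
    _ ≤ F.nubar x := F.div_le_nubar_of_pow_mem_intCl (by positivity) hxr

/-- Let `I = {I_m}` be a filtration of a Noetherian ring `R` and let `IC(I)` be the
filtration with `J_m = {f : f^r ∈ \bar{I_{rm}} for some r > 0}`.  Then
`ν̄_I = ν̄_{IC(I)}`. -/
theorem nubar_eq_nubar_IC {R : Type*} [CommRing R] [IsNoetherianRing R]
    (F G : RingFiltration R)
    (hG : ∀ m, (G.I m : Set R) =
      {f : R | ∃ r : ℕ, 0 < r ∧ f ^ r ∈ Ideal.intCl (F.I (r * m))}) (x : R) :
    F.nubar x = G.nubar x :=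
  nubar_eq_nubar_IC_general F G hG x
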